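/- For every n ≥ 4 and every x ∈ [0,1], the second-order modified Durrmeyer operator satisfies: D̃_n^{M,2}(e_0; x) = 1, D̃_n^{M,2}(e_1; x) = x, and D̃_n^{M,2}(e_2; x) = x^2 + 20x(1−x)/((n+2)(n+3)) − 3/((n+2)(n+3)), where e_i(t) = t^i. -/

import Mathlib

/-- Bernstein basis polynomial `p_{n,k}(x)`, zero when `k < 0` or `k > n`. -/
noncomputable def bern (n : ℕ) (k : ℤ) (x : ℝ) : ℝ :=
  if 0 ≤ k ∧ k ≤ (n : ℤ) then (n.choose k.toNat : ℝ) * x ^ k.toNat * (1 - x) ^ (n - k.toNat)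
  else 0

/-- Second-order modified Bernstein basis `p̃_{n,k}^{M,2}(x)`. -/
noncomputable def pM2 (n : ℕ) (k : ℤ) (x : ℝ) : ℝ :=
  (((n : ℝ) - 2) * x ^ 2 - (n : ℝ) * x + 3 / 2) * bern (n - 2) k x
    + 2 * ((n : ℝ) - 2) * x * (1 - x) * bern (n - 2) (k - 1) x
    + (((n : ℝ) - 2) * x ^ 2 - ((n : ℝ) - 4) * x - 1 / 2) * bern (n - 2) (k - 2) x

/-- Second-order modified Durrmeyer operator `D̃_n^{M,2}(f;x)`. -/
noncomputable def DM2 (n : ℕ) (f : ℝ → ℝ) (x : ℝ) : ℝ :=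
  ((n : ℝ) + 1) * ∑ k ∈ Finset.range (n + 1),
    pM2 n k x * ∫ t in (0:ℝ)..1, bern n k t * f t

/-!
By the Beta integral, `(n + 1) ∫₀¹ p_{n,k}(t) t ^ j dt = (k + 1)⁽ʲ⁾ / (n + 2)⁽ʲ⁾` (rising
factorials), which for `j ≤ 2` is a quadratic polynomial in `k`. Since `p̃_{n,k}^{M,2}` combines
`p_{n-2,k}`, `p_{n-2,k-1}` and `p_{n-2,k-2}`, shifting the summation index turns the sum of a
quadratic in `k` against `p̃_{n,k}^{M,2}(x)` into a combination of the classical moments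
`∑ₖ p_{n-2,k}(x) = 1`, `∑ₖ k p_{n-2,k}(x) = (n-2) x`, `∑ₖ k (k-1) p_{n-2,k}(x) = (n-2)(n-3) x²`.
-/

open Finset Nat Polynomial

theorem bern_natCast {n k : ℕ} (hk : k ≤ n) (x : ℝ) :
    bern n k x = n.choose k * x ^ k * (1 - x) ^ (n - k) := by
  simp [bern, hk]

theorem bern_eq_zero {n : ℕ} {k : ℤ} (hk : k < 0 ∨ n < k) (x : ℝ) : bern n k x = 0 := by
  rw [bern, if_neg]
  omega

theorem bern_natCast_eq_eval (n k : ℕ) (x : ℝ) :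
    bern n k x = (bernsteinPolynomial ℝ n k).eval x := by
  rcases le_or_gt k n with hk | hk
  · simp [bern_natCast hk, bernsteinPolynomial]
  · simp [bern_eq_zero (n := n) (k := k) (Or.inr (by omega)), bernsteinPolynomial,
      choose_eq_zero_of_lt hk]

theorem integral_pow_mul_one_sub_pow (a b : ℕ) :
    ∫ t in (0:ℝ)..1, t ^ a * (1 - t) ^ b = (a ! * b ! : ℝ) / (a + b + 1)! := by
  induction b generalizing a with
  | zero =>
    simp only [pow_zero, mul_one, integral_pow, factorial_zero, cast_one, add_zero,
      factorial_succ, cast_mul]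
    field_simp
    norm_num
  | succ b ih =>
    have hintegrable (c : ℕ) :
        IntervalIntegrable (fun t : ℝ => t ^ c * (1 - t) ^ b) MeasureTheory.volume 0 1 :=
      (by fun_prop : Continuous fun t : ℝ => t ^ c * (1 - t) ^ b).intervalIntegrable 0 1
    calc ∫ t in (0:ℝ)..1, t ^ a * (1 - t) ^ (b + 1)
        = ∫ t in (0:ℝ)..1, t ^ a * (1 - t) ^ b - t ^ (a + 1) * (1 - t) ^ b := by
          congr 1; ext t; ring
      _ = (a ! * b ! : ℝ) / (a + b + 1)! - ((a + 1)! * b ! : ℝ) / (a + 1 + b + 1)! := by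
          rw [intervalIntegral.integral_sub (hintegrable a) (hintegrable (a + 1)), ih, ih]
      _ = (a ! * (b + 1)! : ℝ) / (a + (b + 1) + 1)! := by
          rw [show a + 1 + b + 1 = a + b + 1 + 1 by ring,
            show a + (b + 1) + 1 = a + b + 1 + 1 by ring]
          simp only [factorial_succ, cast_mul]
          field_simp
          push_cast
          ring

theorem succ_mul_integral_bern_mul_pow {n k : ℕ} (hk : k ≤ n) (j : ℕ) :
    (n + 1 : ℝ) * ∫ t in (0:ℝ)..1, bern n k t * t ^ j
      = (k + 1).ascFactorial j / (n + 2).ascFactorial j := by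
  have hbeta : ∫ t in (0:ℝ)..1, bern n k t * t ^ j
      = n.choose k * ((k + j)! * (n - k)! / (n + j + 1)!) := by
    rw [show n + j + 1 = k + j + (n - k) + 1 by omega, ← integral_pow_mul_one_sub_pow,
      ← intervalIntegral.integral_const_mul]
    congr 1; ext t
    rw [bern_natCast hk]
    ring
  have hchoose : (n.choose k * k ! * (n - k)! : ℝ) = n ! := by
    exact_mod_cast choose_mul_factorial_mul_factorial hk
  have hnum : ((k + j)! : ℝ) = k ! * (k + 1).ascFactorial j := by
    exact_mod_cast (factorial_mul_ascFactorial k j).symm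
  have hden : ((n + j + 1)! : ℝ) = (n + 1)! * (n + 2).ascFactorial j := by
    exact_mod_cast (by rw [factorial_mul_ascFactorial, add_right_comm] :
      (n + j + 1)! = (n + 1)! * (n + 1 + 1).ascFactorial j)
  rw [hbeta, hnum, hden, factorial_succ, cast_mul, ← hchoose]
  have : ((n + 2).ascFactorial j : ℝ) ≠ 0 := by positivity
  have : (n.choose k : ℝ) ≠ 0 := by exact_mod_cast (choose_pos hk).ne'
  field_simp
  push_cast
  ring

theorem DM2_pow (n j : ℕ) (x : ℝ) :
    DM2 n (fun t => t ^ j) x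
      = ∑ k ∈ range (n + 1), pM2 n k x * ((k + 1).ascFactorial j / (n + 2).ascFactorial j) := by
  rw [DM2, mul_sum]
  refine sum_congr rfl fun k hk => ?_
  rw [mul_left_comm, succ_mul_integral_bern_mul_pow (mem_range_succ_iff.mp hk)]

theorem sum_bern_mul_quadratic (m : ℕ) (x a b c : ℝ) :
    ∑ i ∈ range (m + 1), bern m i x * (a * i ^ 2 + b * i + c)
      = a * (m * (m - 1) * x ^ 2 + m * x) + b * (m * x) + c := by
  have h0 := congrArg (eval x) (bernsteinPolynomial.sum ℝ m)
  have h1 := congrArg (eval x) (bernsteinPolynomial.sum_smul ℝ m)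
  have h2 := congrArg (eval x) (bernsteinPolynomial.sum_mul_smul ℝ m)
  simp only [eval_finsetSum, nsmul_eq_mul, eval_mul, eval_natCast, eval_one, eval_X, eval_pow,
    ← bern_natCast_eq_eval] at h0 h1 h2
  have hcast (i : ℕ) : ((i * (i - 1) : ℕ) : ℝ) = i * (i - 1) := by
    rcases i with _ | i <;> push_cast [Nat.add_sub_cancel] <;> ring
  simp only [hcast] at h2
  calc ∑ i ∈ range (m + 1), bern m i x * (a * i ^ 2 + b * i + c)
      = a * ∑ i ∈ range (m + 1), (i * (i - 1) : ℝ) * bern m i x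
        + (a + b) * ∑ i ∈ range (m + 1), (i : ℝ) * bern m i x
        + c * ∑ i ∈ range (m + 1), bern m i x := by
        simp only [mul_sum, ← sum_add_distrib]
        congr 1; ext i; ring
    _ = _ := by rw [h0, h1, h2]; ring

theorem sum_bern_sub_mul (m j : ℕ) {N : ℕ} (hN : m + j < N) (x : ℝ) (g : ℕ → ℝ) :
    ∑ k ∈ range N, bern m ((k : ℤ) - j) x * g k = ∑ i ∈ range (m + 1), bern m i x * g (i + j) := by
  rw [← sum_subset (range_subset_range.2 (by omega : j + (m + 1) ≤ N)), sum_range_add,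
    sum_eq_zero, zero_add]
  · refine sum_congr rfl fun i _ => ?_
    rw [add_comm j i]
    push_cast
    rw [add_sub_cancel_right]
  · intro k hk
    rw [bern_eq_zero (Or.inl (by simp only [mem_range] at hk; omega)), zero_mul]
  · intro k _ hk
    rw [bern_eq_zero (Or.inr (by simp only [mem_range] at hk; omega)), zero_mul]

theorem sum_pM2_mul_quadratic (m : ℕ) (x a b c : ℝ) :
    ∑ k ∈ range (m + 3), pM2 (m + 2) k x * (a * k ^ 2 + b * k + c)
      = a * ((m ^ 2 + 9 * m) * x ^ 2 - (3 * m - 8) * x - 2) + b * ((m + 4) * x - 1) + c := by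
  have hshift (j : ℕ) (hj : j ≤ 2) :
      ∑ k ∈ range (m + 3), bern m ((k : ℤ) - j) x * (a * k ^ 2 + b * k + c)
        = a * (m * (m - 1) * x ^ 2 + m * x) + (2 * j * a + b) * (m * x)
          + (a * j ^ 2 + b * j + c) := by
    rw [sum_bern_sub_mul m j (by omega), ← sum_bern_mul_quadratic]
    refine sum_congr rfl fun i _ => ?_
    push_cast
    ring
  have h0 := hshift 0 (by norm_num)
  have h1 := hshift 1 (by norm_num)
  have h2 := hshift 2 le_rfl
  simp only [cast_zero, sub_zero, cast_one, cast_ofNat] at h0 h1 h2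
  calc ∑ k ∈ range (m + 3), pM2 (m + 2) k x * (a * k ^ 2 + b * k + c)
      = (m * x ^ 2 - (m + 2) * x + 3 / 2)
          * ∑ k ∈ range (m + 3), bern m k x * (a * k ^ 2 + b * k + c)
        + 2 * m * x * (1 - x) * ∑ k ∈ range (m + 3), bern m (k - 1) x * (a * k ^ 2 + b * k + c)
        + (m * x ^ 2 - (m - 2) * x - 1 / 2)
          * ∑ k ∈ range (m + 3), bern m (k - 2) x * (a * k ^ 2 + b * k + c) := by
        simp only [mul_sum, ← sum_add_distrib]
        refine sum_congr rfl fun k _ => ?_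
        simp only [pM2, Nat.add_sub_cancel]
        push_cast
        ring
    _ = _ := by rw [h0, h1, h2]; ring

theorem DM2_moments_general (n : ℕ) (hn : 4 ≤ n) (x : ℝ) :
    DM2 n (fun _ => 1) x = 1 ∧
    DM2 n (fun t => t) x = x ∧
    DM2 n (fun t => t ^ 2) x
      = x ^ 2 + 20 * x * (1 - x) / (((n : ℝ) + 2) * ((n : ℝ) + 3))
        - 3 / (((n : ℝ) + 2) * ((n : ℝ) + 3)) := by
  obtain ⟨m, rfl⟩ : ∃ m, n = m + 2 := ⟨n - 2, by omega⟩
  have moment (j : ℕ) (a b c : ℝ)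
      (h : ∀ k : ℕ, ((k + 1).ascFactorial j / (m + 2 + 2).ascFactorial j : ℝ)
        = a * k ^ 2 + b * k + c) :
      DM2 (m + 2) (fun t => t ^ j) x
        = a * ((m ^ 2 + 9 * m) * x ^ 2 - (3 * m - 8) * x - 2) + b * ((m + 4) * x - 1) + c := by
    rw [DM2_pow, ← sum_pM2_mul_quadratic]
    exact sum_congr rfl fun k _ => by rw [h]
  have hm4 : (m + 4 : ℝ) ≠ 0 := by positivity
  have hm5 : (m + 5 : ℝ) ≠ 0 := by positivity
  refine ⟨?_, ?_, ?_⟩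
  · simpa using moment 0 0 0 1 (by simp)
  · rw [← funext fun t : ℝ => pow_one t, moment 1 0 (1 / (m + 4)) (1 / (m + 4)) fun k => by
      push_cast [ascFactorial]; field_simp; ring]
    field_simp
    ring
  · rw [moment 2 (1 / ((m + 4) * (m + 5))) (3 / ((m + 4) * (m + 5))) (2 / ((m + 4) * (m + 5)))
      fun k => by push_cast [ascFactorial]; field_simp; ring]
    push_cast
    field_simp
    ring

theorem DM2_moments (n : ℕ) (hn : 4 ≤ n) (x : ℝ) (hx : x ∈ Set.Icc (0:ℝ) 1) :
    DM2 n (fun _ => 1) x = 1 ∧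
    DM2 n (fun t => t) x = x ∧
    DM2 n (fun t => t ^ 2) x
      = x ^ 2 + 20 * x * (1 - x) / (((n : ℝ) + 2) * ((n : ℝ) + 3))
        - 3 / (((n : ℝ) + 2) * ((n : ℝ) + 3)) :=
  DM2_moments_general n hn x
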